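/- For the Riemannian metric g = g(w) on ℝ_{>0} × Y, set T₀ = lim_{r→0} T(r) and T_∞ = lim_{r→∞} T(r). For any (r₀, y₀), (r₁, y₁) ∈ ℝ_{>0} × Y: (1) if T₀ ∈ ℝ and lim_{r→0} w(r) = 0, then d_g((r₀,y₀),(r₁,y₁)) ≤ T(r₀) + T(r₁) − 2T₀; in particular, for any R > 0 the diameter with respect to d_g of {(r,y) : r ≤ R} is at most 2(T(R) − T₀). (2) If T_∞ ∈ ℝ and lim_{r→∞} w(r) = 0, then d_g((r₀,y₀),(r₁,y₁)) ≤ 2T_∞ − T(r₀) − T(r₁); in particular, for any R > 0 the diameter with respect to d_g of {(r,y) : r ≥ R} is at most 2(T_∞ − T(R)). -/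

import Mathlib

/-! STATEMENT 12: diameter bounds near r = 0 and r = ∞ for the metric g(w). -/

noncomputable section

open Real Set Filter Topology

variable {E : Type*} [NormedAddCommGroup E] [NormedSpace ℝ E]

/-- `g` is (pointwise) a pseudo-Riemannian metric on the chart domain `U`:
symmetric, bilinear and nondegenerate at every point of `U`. -/
def IsPseudoMetricOn (U : Set E) (g : E → E → E → ℝ) : Prop :=
  (∀ x ∈ U, ∀ u v, g x u v = g x v u) ∧
  (∀ x ∈ U, ∀ u, IsLinearMap ℝ (g x u)) ∧
  (∀ x ∈ U, ∀ u, (∀ v, g x u v = 0) → u = 0)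

/-- `Γ` is the Levi-Civita connection of the metric `g` on the chart domain `U`
(`Γ x u v` are the Christoffel symbols): torsion-free, bilinear and compatible
with the metric. -/
def IsLeviCivitaOn (U : Set E) (g : E → E → E → ℝ) (Γ : E → E → E → E) : Prop :=
  (∀ x ∈ U, ∀ u v, Γ x u v = Γ x v u) ∧
  (∀ x ∈ U, ∀ u, IsLinearMap ℝ (Γ x u)) ∧
  (∀ x ∈ U, ∀ u v w, fderiv ℝ (fun z => g z v w) x u
      = g x (Γ x u v) w + g x v (Γ x u w))

/-- The curvature tensor of the connection `Γ`, with the sign convention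
`R(A,B) = [∇_A, ∇_B] − ∇_{[A,B]}`, evaluated in the chart on constant vector
fields (so that `[u,v] = 0`). -/
def curvOf (Γ : E → E → E → E) (x u v w : E) : E :=
  fderiv ℝ (fun z => Γ z v w) x u - fderiv ℝ (fun z => Γ z u w) x v
    + Γ x u (Γ x v w) - Γ x v (Γ x u w)

/-- The sectional curvature `K^g` of the plane spanned by `u`, `v`. -/
def sectionalOf (g : E → E → E → ℝ) (Γ : E → E → E → E) (x u v : E) : ℝ :=
  g x (curvOf Γ x u v v) u / (g x u u * g x v v - g x u v ^ 2)

/-- A piecewise smooth path `c : [0,1] → α`: continuous on `[0,1]` and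
differentiable away from finitely many points. -/
def IsPiecewisePath {α : Type*} [NormedAddCommGroup α] [NormedSpace ℝ α]
    (c : ℝ → α) : Prop :=
  ContinuousOn c (Set.Icc 0 1) ∧
  ∃ s : Finset ℝ, ∀ t ∈ Set.Icc (0:ℝ) 1 \ (s : Set ℝ), DifferentiableAt ℝ c t

/-- The speed `|ċ(t)|_g` of a path with respect to the metric `g`. -/
noncomputable def speedOf {α : Type*} [NormedAddCommGroup α] [NormedSpace ℝ α]
    (g : α → α → α → ℝ) (c : ℝ → α) (t : ℝ) : ℝ :=
  Real.sqrt (g (c t) (deriv c t) (deriv c t))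

/-- The length `L_g(c) = ∫₀¹ |ċ(t)|_g dt` of a path. -/
noncomputable def lengthOf {α : Type*} [NormedAddCommGroup α] [NormedSpace ℝ α]
    (g : α → α → α → ℝ) (c : ℝ → α) : ℝ :=
  ∫ t in (0:ℝ)..1, speedOf g c t

/-- The pseudometric induced by the Riemannian metric `g` on `U`: the infimum
of the lengths of piecewise smooth paths in `U` joining the two points. -/
noncomputable def pseudoDistOf {α : Type*} [NormedAddCommGroup α] [NormedSpace ℝ α]
    (U : Set α) (g : α → α → α → ℝ) (p q : α) : ℝ :=
  sInf {L : ℝ | ∃ c : ℝ → α, IsPiecewisePath c ∧ (∀ t ∈ Set.Icc (0:ℝ) 1, c t ∈ U) ∧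
    IntervalIntegrable (speedOf g c) MeasureTheory.volume 0 1 ∧
    c 0 = p ∧ c 1 = q ∧ L = lengthOf g c}

/-- The warped product metric `g(w) = (k w(r)/r²) dr² + w(r) g_Y` on
`ℝ_{>0} × Y ⊆ ℝ × F`. -/
noncomputable def warpedW {F : Type*} [NormedAddCommGroup F] [NormedSpace ℝ F]
    (k : ℝ) (w : ℝ → ℝ) (gY : F → F → F → ℝ) (p u v : ℝ × F) : ℝ :=
  k * w p.1 / p.1 ^ 2 * u.1 * v.1 + w p.1 * gY p.2 u.2 v.2

/-- The region `ℝ_{>0} × Y ⊆ ℝ × F`. -/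
def RegionW {F : Type*} (Y : Set F) : Set (ℝ × F) := {p | 0 < p.1 ∧ p.2 ∈ Y}

/-- `T(r) = ∫_{R₀}^r √(k w(q))/q dq`. -/
noncomputable def TW (k : ℝ) (w : ℝ → ℝ) (R₀ r : ℝ) : ℝ :=
  ∫ q in R₀..r, Real.sqrt (k * w q) / q

namespace Stmt12Aux

open MeasureTheory intervalIntegral

variable {α : Type*} [NormedAddCommGroup α] [NormedSpace ℝ α]

lemma lengthOf_nonneg (g : α → α → α → ℝ) (c : ℝ → α) : 0 ≤ lengthOf g c :=
  intervalIntegral.integral_nonneg zero_le_one fun _ _ => Real.sqrt_nonneg _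

lemma pseudoDistOf_le (U : Set α) (g : α → α → α → ℝ) (p q : α) (c : ℝ → α)
    (h1 : IsPiecewisePath c) (h2 : ∀ t ∈ Set.Icc (0:ℝ) 1, c t ∈ U)
    (h3 : IntervalIntegrable (speedOf g c) volume 0 1) (h4 : c 0 = p) (h5 : c 1 = q) :
    pseudoDistOf U g p q ≤ lengthOf g c := by
  apply csInf_le
  · refine ⟨0, ?_⟩
    rintro L ⟨c', -, -, -, -, -, rfl⟩
    exact lengthOf_nonneg g c'
  · exact ⟨c, h1, h2, h3, h4, h5, rfl⟩

lemma ae_nmem_of_finite {N : Set ℝ} (hN : N.Finite) : ∀ᵐ t : ℝ, t ∉ N := by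
  have h0 : MeasureTheory.volume N = 0 := hN.measure_zero _
  have : {t : ℝ | ¬ t ∉ N} = N := by ext t; simp
  rw [MeasureTheory.ae_iff, this]; exact h0

lemma intervalIntegrable_congr_of_finite {f g : ℝ → ℝ} {a b : ℝ} {N : Set ℝ} (hN : N.Finite)
    (h : ∀ t ∈ Set.uIoc a b, t ∉ N → f t = g t) (hf : IntervalIntegrable f volume a b) :
    IntervalIntegrable g volume a b := by
  refine hf.congr_ae ?_
  filter_upwards [MeasureTheory.ae_restrict_mem measurableSet_uIoc,
    MeasureTheory.ae_restrict_of_ae (ae_nmem_of_finite hN)] with t ht hnt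
  exact h t ht hnt

lemma integral_congr_of_finite {f g : ℝ → ℝ} {a b : ℝ} {N : Set ℝ} (hN : N.Finite)
    (h : ∀ t ∈ Set.uIoc a b, t ∉ N → f t = g t) :
    ∫ t in a..b, f t = ∫ t in a..b, g t := by
  apply intervalIntegral.integral_congr_ae
  filter_upwards [ae_nmem_of_finite hN] with t hnt ht
  exact h t ht hnt

lemma continuousOn_union_closed {β γ : Type*} [TopologicalSpace β] [TopologicalSpace γ]
    {f : β → γ} {s t : Set β} (hs : IsClosed s) (ht : IsClosed t)
    (hfs : ContinuousOn f s) (hft : ContinuousOn f t) : ContinuousOn f (s ∪ t) := by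
  intro x hx
  refine ContinuousWithinAt.union ?_ ?_
  · by_cases h : x ∈ s
    · exact hfs x h
    · exact continuousWithinAt_of_notMem_closure (by rwa [hs.closure_eq])
  · by_cases h : x ∈ t
    · exact hft x h
    · exact continuousWithinAt_of_notMem_closure (by rwa [ht.closure_eq])

lemma sqrt_four : Real.sqrt 4 = 2 := by
  rw [show (4:ℝ) = 2^2 by norm_num, Real.sqrt_sq (by norm_num : (0:ℝ) ≤ 2)]

end Stmt12Aux

namespace Stmt12Aux

open MeasureTheory intervalIntegral Set

variable {α : Type*} [NormedAddCommGroup α] [NormedSpace ℝ α]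

lemma concat {U : Set α} {g : α → α → α → ℝ}
    (hg2 : ∀ p ∈ U, ∀ u : α, g p ((2:ℝ) • u) ((2:ℝ) • u) = 4 * g p u u)
    {c₁ c₂ : ℝ → α}
    (h₁p : IsPiecewisePath c₁) (h₁U : ∀ t ∈ Set.Icc (0:ℝ) 1, c₁ t ∈ U)
    (h₁i : IntervalIntegrable (speedOf g c₁) volume 0 1)
    (h₂p : IsPiecewisePath c₂) (h₂U : ∀ t ∈ Set.Icc (0:ℝ) 1, c₂ t ∈ U)
    (h₂i : IntervalIntegrable (speedOf g c₂) volume 0 1)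
    (hm : c₁ 1 = c₂ 0) :
    ∃ c : ℝ → α, IsPiecewisePath c ∧ (∀ t ∈ Set.Icc (0:ℝ) 1, c t ∈ U) ∧
      IntervalIntegrable (speedOf g c) volume 0 1 ∧
      c 0 = c₁ 0 ∧ c 1 = c₂ 1 ∧ lengthOf g c = lengthOf g c₁ + lengthOf g c₂ := by
  obtain ⟨h₁c, s₁, h₁d⟩ := h₁p
  obtain ⟨h₂c, s₂, h₂d⟩ := h₂p
  set c : ℝ → α := fun t => if t ≤ 1/2 then c₁ (2*t) else c₂ (2*t - 1) with hcdef
  have e₁ : ∀ t : ℝ, t ≤ 1/2 → c t = c₁ (2*t) := fun t ht => if_pos ht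
  have e₂ : ∀ t : ℝ, 1/2 ≤ t → c t = c₂ (2*t-1) := by
    intro t ht
    rcases eq_or_lt_of_le ht with h | h
    · have : t = 1/2 := h.symm
      subst this
      show (if (1:ℝ)/2 ≤ 1/2 then c₁ (2*(1/2)) else c₂ (2*(1/2)-1)) = c₂ (2*(1/2)-1)
      rw [if_pos le_rfl]
      norm_num [hm]
    · show (if t ≤ 1/2 then c₁ (2*t) else c₂ (2*t-1)) = c₂ (2*t-1)
      rw [if_neg (not_le.mpr h)]
  -- membership
  have hU : ∀ t ∈ Set.Icc (0:ℝ) 1, c t ∈ U := by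
    intro t ht
    by_cases h : t ≤ 1/2
    · rw [e₁ t h]; exact h₁U _ ⟨by linarith [ht.1], by linarith⟩
    · rw [e₂ t (le_of_lt (not_le.mp h))]
      exact h₂U _ ⟨by linarith [not_le.mp h], by linarith [ht.2]⟩
  -- continuity
  have hcont : ContinuousOn c (Set.Icc 0 1) := by
    rw [← Set.Icc_union_Icc_eq_Icc (by norm_num : (0:ℝ) ≤ 1/2) (by norm_num : (1:ℝ)/2 ≤ 1)]
    apply continuousOn_union_closed isClosed_Icc isClosed_Icc
    · have hmap : Set.MapsTo (fun t : ℝ => 2*t) (Set.Icc 0 (1/2)) (Set.Icc 0 1) := by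
        intro t ht
        simp only [Set.mem_Icc] at ht ⊢
        constructor <;> linarith [ht.1, ht.2]
      exact (h₁c.comp (continuous_const.mul continuous_id).continuousOn hmap).congr
        (fun t ht => e₁ t ht.2)
    · have hmap : Set.MapsTo (fun t : ℝ => 2*t-1) (Set.Icc (1/2) 1) (Set.Icc 0 1) := by
        intro t ht
        simp only [Set.mem_Icc] at ht ⊢
        constructor <;> linarith [ht.1, ht.2]
      exact (h₂c.comp ((continuous_const.mul continuous_id).sub continuous_const).continuousOn
        hmap).congr (fun t ht => e₂ t ht.1)
  -- differentiability
  have hdiff : ∀ t ∈ Set.Icc (0:ℝ) 1 \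
      ((insert (1/2 : ℝ) (s₁.image (fun x => x/2) ∪ s₂.image (fun x => (x+1)/2)) : Finset ℝ) : Set ℝ),
      DifferentiableAt ℝ c t := by
    rintro t ⟨ht, hts⟩
    simp only [Finset.coe_insert, Set.mem_insert_iff, Finset.coe_union, Set.mem_union,
      Finset.coe_image, Set.mem_image, not_or, not_exists] at hts
    push_neg at hts
    obtain ⟨hne, hs1, hs2⟩ := hts
    rcases Ne.lt_or_gt hne with hlt | hgt
    · have hev : c =ᶠ[nhds t] fun t' => c₁ (2*t') := by
        filter_upwards [Iio_mem_nhds hlt] with x hx using e₁ x (le_of_lt hx)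
      have h2t : DifferentiableAt ℝ c₁ (2*t) := by
        apply h₁d
        refine ⟨⟨by linarith [ht.1], by linarith⟩, ?_⟩
        intro hmem
        exact hs1 (2*t) hmem (by ring)
      have : DifferentiableAt ℝ (fun t' => c₁ (2*t')) t :=
        h2t.comp t ((differentiableAt_id.const_mul (2:ℝ)))
      exact this.congr_of_eventuallyEq hev
    · have hev : c =ᶠ[nhds t] fun t' => c₂ (2*t'-1) := by
        filter_upwards [Ioi_mem_nhds hgt] with x hx using e₂ x (le_of_lt hx)
      have h2t : DifferentiableAt ℝ c₂ (2*t-1) := by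
        apply h₂d
        refine ⟨⟨by linarith, by linarith [ht.2]⟩, ?_⟩
        intro hmem
        exact hs2 (2*t-1) hmem (by ring)
      have : DifferentiableAt ℝ (fun t' => c₂ (2*t'-1)) t :=
        h2t.comp t ((differentiableAt_id.const_mul (2:ℝ)).sub_const 1)
      exact this.congr_of_eventuallyEq hev
  -- speed identities
  have key₁ : ∀ t ∈ Set.uIoc (0:ℝ) (1/2),
      t ∉ (insert (1/2:ℝ) ((s₁.image (fun x => x/2) : Finset ℝ)) : Set ℝ) →
      (fun t => 2 * speedOf g c₁ (2*t)) t = speedOf g c t := by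
    intro t ht htn
    rw [Set.uIoc_of_le (by norm_num : (0:ℝ) ≤ 1/2)] at ht
    simp only [Set.mem_insert_iff, Finset.coe_image, Set.mem_image, not_or, not_exists] at htn
    push_neg at htn
    obtain ⟨hne, hs1⟩ := htn
    have hlt : t < 1/2 := lt_of_le_of_ne ht.2 hne
    have hev : c =ᶠ[nhds t] fun t' => c₁ (2*t') := by
      filter_upwards [Iio_mem_nhds hlt] with x hx using e₁ x (le_of_lt hx)
    have h2mem : (2*t) ∈ Set.Icc (0:ℝ) 1 := ⟨by linarith [ht.1], by linarith⟩
    have h2t : DifferentiableAt ℝ c₁ (2*t) := by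
      apply h₁d
      refine ⟨h2mem, fun hmem => hs1 (2*t) hmem (by ring)⟩
    have hDA : HasDerivAt (fun t' => (2:ℝ)*t') (2:ℝ) t := by
      simpa using (hasDerivAt_id t).const_mul (2:ℝ)
    have hD : HasDerivAt c ((2:ℝ) • deriv c₁ (2*t)) t :=
      ((h2t.hasDerivAt.scomp t hDA)).congr_of_eventuallyEq hev
    have hdc : deriv c t = (2:ℝ) • deriv c₁ (2*t) := hD.deriv
    simp only [speedOf]
    rw [hdc, e₁ t (le_of_lt hlt), hg2 _ (h₁U _ h2mem), Real.sqrt_mul (by norm_num : (0:ℝ) ≤ 4),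
      sqrt_four]
  have key₂ : ∀ t ∈ Set.uIoc (1/2:ℝ) 1,
      t ∉ ((s₂.image (fun x => (x+1)/2) : Finset ℝ) : Set ℝ) →
      (fun t => 2 * speedOf g c₂ (2*t-1)) t = speedOf g c t := by
    intro t ht htn
    rw [Set.uIoc_of_le (by norm_num : (1:ℝ)/2 ≤ 1)] at ht
    simp only [Finset.coe_image, Set.mem_image, not_exists] at htn
    push_neg at htn
    have hgt : 1/2 < t := ht.1
    have hev : c =ᶠ[nhds t] fun t' => c₂ (2*t'-1) := by
      filter_upwards [Ioi_mem_nhds hgt] with x hx using e₂ x (le_of_lt hx)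
    have h2mem : (2*t-1) ∈ Set.Icc (0:ℝ) 1 := ⟨by linarith, by linarith [ht.2]⟩
    have h2t : DifferentiableAt ℝ c₂ (2*t-1) := by
      apply h₂d
      exact ⟨h2mem, fun hmem => htn (2*t-1) hmem (by ring)⟩
    have hDA : HasDerivAt (fun t' => (2:ℝ)*t'-1) (2:ℝ) t := by
      simpa using ((hasDerivAt_id t).const_mul (2:ℝ)).sub_const 1
    have hD : HasDerivAt c ((2:ℝ) • deriv c₂ (2*t-1)) t :=
      ((h2t.hasDerivAt.scomp t hDA)).congr_of_eventuallyEq hev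
    have hdc : deriv c t = (2:ℝ) • deriv c₂ (2*t-1) := hD.deriv
    simp only [speedOf]
    rw [hdc, e₂ t (le_of_lt hgt), hg2 _ (h₂U _ h2mem), Real.sqrt_mul (by norm_num : (0:ℝ) ≤ 4),
      sqrt_four]
  -- integrability on the two halves
  have base₁ : IntervalIntegrable (fun t => 2 * speedOf g c₁ (2*t)) volume 0 (1/2) := by
    have := (h₁i.comp_mul_left (c := 2)).const_mul 2
    norm_num at this
    exact this
  have base₂ : IntervalIntegrable (fun t => 2 * speedOf g c₂ (2*t-1)) volume (1/2) 1 := by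
    have h1 : IntervalIntegrable (fun x => speedOf g c₂ (x + -1)) volume 1 2 := by
      have := h₂i.comp_add_right (-1)
      norm_num at this ⊢
      exact this
    have h2 := h1.comp_mul_left (c := 2)
    simp only [← sub_eq_add_neg] at h2
    norm_num at h2
    exact h2.const_mul 2
  have i₁ : IntervalIntegrable (speedOf g c) volume 0 (1/2) :=
    intervalIntegrable_congr_of_finite ((Finset.finite_toSet _).insert _) key₁ base₁
  have i₂ : IntervalIntegrable (speedOf g c) volume (1/2) 1 :=
    intervalIntegrable_congr_of_finite (Finset.finite_toSet _) key₂ base₂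
  -- length
  have L : lengthOf g c = lengthOf g c₁ + lengthOf g c₂ := by
    show (∫ t in (0:ℝ)..1, speedOf g c t) = _
    rw [← intervalIntegral.integral_add_adjacent_intervals i₁ i₂]
    congr 1
    · rw [← integral_congr_of_finite ((Finset.finite_toSet _).insert _) key₁]
      rw [intervalIntegral.integral_const_mul, ← smul_eq_mul,
        intervalIntegral.smul_integral_comp_mul_left]
      norm_num [lengthOf]
    · rw [← integral_congr_of_finite (Finset.finite_toSet _) key₂]
      rw [intervalIntegral.integral_const_mul, ← smul_eq_mul]
      simp only [sub_eq_add_neg]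
      rw [intervalIntegral.smul_integral_comp_mul_add]
      norm_num [lengthOf]
  refine ⟨c, ⟨hcont, _, hdiff⟩, hU, i₁.trans i₂, ?_, ?_, L⟩
  · rw [e₁ 0 (by norm_num)]; norm_num
  · rw [e₂ 1 (by norm_num)]; norm_num

end Stmt12Aux

namespace Stmt12Aux

open MeasureTheory intervalIntegral Set Real

section Warped

variable {F : Type*} [NormedAddCommGroup F] [NormedSpace ℝ F]
variable {Y : Set F} {gY : F → F → F → ℝ} {k : ℝ} {w : ℝ → ℝ}

lemma fker_contOn (hw : ContDiffOn ℝ (⊤ : ℕ∞) w (Ioi 0)) :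
    ContinuousOn (fun q => Real.sqrt (k * w q) / q) (Ioi 0) := by
  apply ContinuousOn.div
  · exact Real.continuous_sqrt.comp_continuousOn (continuousOn_const.mul hw.continuousOn)
  · exact continuousOn_id
  · exact fun q hq => ne_of_gt hq

lemma fker_int (hw : ContDiffOn ℝ (⊤ : ℕ∞) w (Ioi 0)) {a b : ℝ} (ha : 0 < a) (hb : 0 < b) :
    IntervalIntegrable (fun q => Real.sqrt (k * w q) / q) volume a b := by
  apply ContinuousOn.intervalIntegrable
  apply (fker_contOn hw).mono
  intro x hx
  exact lt_of_lt_of_le (lt_min ha hb) (by simpa using hx.1)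

lemma TW_diff (hw : ContDiffOn ℝ (⊤ : ℕ∞) w (Ioi 0)) {R₀ a b : ℝ} (hR₀ : 0 < R₀)
    (ha : 0 < a) (hb : 0 < b) :
    TW k w R₀ b - TW k w R₀ a = ∫ q in a..b, Real.sqrt (k * w q) / q :=
  intervalIntegral.integral_interval_sub_left (fker_int hw hR₀ hb) (fker_int hw hR₀ ha)

lemma TW_mono (hw : ContDiffOn ℝ (⊤ : ℕ∞) w (Ioi 0)) {R₀ a b : ℝ} (hR₀ : 0 < R₀)
    (ha : 0 < a) (hab : a ≤ b) : TW k w R₀ a ≤ TW k w R₀ b := by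
  have hb : 0 < b := lt_of_lt_of_le ha hab
  have h1 := TW_diff (k := k) hw hR₀ ha hb
  have h2 : 0 ≤ ∫ q in a..b, Real.sqrt (k * w q) / q := by
    apply intervalIntegral.integral_nonneg hab
    intro u hu
    exact div_nonneg (Real.sqrt_nonneg _) (le_of_lt (lt_of_lt_of_le ha hu.1))
  linarith

lemma warped_scale (hgsym : ∀ y ∈ Y, ∀ u v, gY y u v = gY y v u)
    (hglin : ∀ y ∈ Y, ∀ u, IsLinearMap ℝ (gY y u)) :
    ∀ p ∈ RegionW Y, ∀ u : ℝ × F,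
      warpedW k w gY p ((2:ℝ) • u) ((2:ℝ) • u) = 4 * warpedW k w gY p u u := by
  intro p hp u
  have hy := hp.2
  have h1 : gY p.2 ((2:ℝ) • u.2) ((2:ℝ) • u.2) = 4 * gY p.2 u.2 u.2 := by
    rw [(hglin _ hy _).map_smul, hgsym _ hy, (hglin _ hy _).map_smul, hgsym _ hy]
    simp only [smul_eq_mul]; ring
  simp only [warpedW, Prod.smul_fst, Prod.smul_snd, smul_eq_mul, h1]
  ring

lemma radial (hglin : ∀ y ∈ Y, ∀ u, IsLinearMap ℝ (gY y u))
    (hw : ContDiffOn ℝ (⊤ : ℕ∞) w (Ioi 0)) (hwpos : ∀ r > (0:ℝ), 0 < w r) (hk : 0 < k)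
    {a b : ℝ} (ha : 0 < a) (hb : 0 < b) {y : F} (hy : y ∈ Y) :
    ∃ c : ℝ → ℝ × F, IsPiecewisePath c ∧ (∀ t ∈ Set.Icc (0:ℝ) 1, c t ∈ RegionW Y) ∧
      IntervalIntegrable (speedOf (warpedW k w gY) c) volume 0 1 ∧
      c 0 = (a, y) ∧ c 1 = (b, y) ∧
      lengthOf (warpedW k w gY) c
        = ∫ q in (min a b)..(max a b), Real.sqrt (k * w q) / q := by
  set γ : ℝ → ℝ := fun t => a + t * (b - a) with hγdef
  set c : ℝ → ℝ × F := fun t => (γ t, y) with hcdef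
  have hγd : ∀ t : ℝ, HasDerivAt γ (b - a) t := by
    intro t
    simpa [hγdef] using ((hasDerivAt_id t).mul_const (b - a)).const_add a
  have hcd : ∀ t : ℝ, HasDerivAt c (b - a, (0:F)) t :=
    fun t => (hγd t).prodMk (hasDerivAt_const t y)
  have hpos : ∀ t ∈ Set.Icc (0:ℝ) 1, 0 < γ t := by
    intro t ht
    obtain ⟨h0, h1⟩ := ht
    rcases le_total a b with h | h
    · have : 0 ≤ t * (b - a) := mul_nonneg h0 (by linarith)
      simp only [hγdef]; linarith
    · have : (1 - t) * (a - b) ≥ 0 := mul_nonneg (by linarith) (by linarith)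
      simp only [hγdef]; nlinarith
  have hmem : ∀ t ∈ Set.Icc (0:ℝ) 1, c t ∈ RegionW Y :=
    fun t ht => ⟨hpos t ht, hy⟩
  have hz : gY y (0:F) (0:F) = 0 := (hglin y hy 0).map_zero
  have hspeed : ∀ t ∈ Set.Icc (0:ℝ) 1,
      speedOf (warpedW k w gY) c t = Real.sqrt (k * w (γ t)) / γ t * |b - a| := by
    intro t ht
    have hr := hpos t ht
    have hwp : 0 < w (γ t) := hwpos _ hr
    simp only [speedOf, (hcd t).deriv]
    have hval : warpedW k w gY (c t) (b - a, (0:F)) (b - a, (0:F))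
        = k * w (γ t) / (γ t) ^ 2 * (b - a) * (b - a) := by
      simp only [warpedW, hcdef, hz]
      ring
    rw [hval]
    have hnn : (0:ℝ) ≤ Real.sqrt (k * w (γ t)) / γ t * |b - a| := by positivity
    rw [show k * w (γ t) / (γ t) ^ 2 * (b - a) * (b - a)
        = (Real.sqrt (k * w (γ t)) / γ t * |b - a|) ^ 2 by
      rw [mul_pow, div_pow, Real.sq_sqrt (by positivity), sq_abs]; ring]
    exact Real.sqrt_sq hnn
  have hγc : Continuous γ := by
    exact continuous_const.add (continuous_id.mul continuous_const)
  have hbase_cont : ContinuousOn (fun t => Real.sqrt (k * w (γ t)) / γ t * |b - a|)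
      (Set.Icc 0 1) := by
    apply ContinuousOn.mul _ continuousOn_const
    exact (fker_contOn hw).comp hγc.continuousOn (fun t ht => hpos t ht)
  have hbase_int : IntervalIntegrable (fun t => Real.sqrt (k * w (γ t)) / γ t * |b - a|)
      volume 0 1 := by
    apply ContinuousOn.intervalIntegrable
    rwa [Set.uIcc_of_le zero_le_one]
  have hint : IntervalIntegrable (speedOf (warpedW k w gY) c) volume 0 1 := by
    apply intervalIntegrable_congr_of_finite Set.finite_empty _ hbase_int
    intro t ht _
    rw [Set.uIoc_of_le zero_le_one] at ht
    exact (hspeed t (Set.Ioc_subset_Icc_self ht)).symm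
  have hsub : (∫ t in (0:ℝ)..1, (b - a) • ((fun q => Real.sqrt (k * w q) / q) ∘ γ) t)
      = ∫ q in a..b, Real.sqrt (k * w q) / q := by
    have himg : ContinuousOn (fun q => Real.sqrt (k * w q) / q) (γ '' Set.uIcc 0 1) := by
      apply (fker_contOn hw).mono
      rintro x ⟨t, ht, rfl⟩
      exact hpos t (by rwa [Set.uIcc_of_le zero_le_one] at ht)
    have h0 : γ 0 = a := by simp [hγdef]
    have h1 : γ 1 = b := by simp [hγdef]
    have hres := intervalIntegral.integral_comp_smul_deriv' (f := γ) (f' := fun _ => b - a)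
      (g := fun q => Real.sqrt (k * w q) / q) (fun x _ => hγd x) continuousOn_const himg
    rw [h0, h1] at hres
    exact hres
  have hlen : lengthOf (warpedW k w gY) c
      = ∫ q in (min a b)..(max a b), Real.sqrt (k * w q) / q := by
    rcases le_total a b with hab | hab
    · rw [min_eq_left hab, max_eq_right hab, ← hsub]
      apply intervalIntegral.integral_congr
      intro t ht
      rw [Set.uIcc_of_le zero_le_one] at ht
      rw [hspeed t ht, abs_of_nonneg (sub_nonneg.mpr hab)]
      simp only [smul_eq_mul, Function.comp]
      ring
    · rw [min_eq_right hab, max_eq_left hab, intervalIntegral.integral_symm a b, ← hsub,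
        ← intervalIntegral.integral_neg]
      apply intervalIntegral.integral_congr
      intro t ht
      rw [Set.uIcc_of_le zero_le_one] at ht
      rw [hspeed t ht, abs_of_nonpos (sub_nonpos.mpr hab)]
      simp only [smul_eq_mul, Function.comp]
      ring
  refine ⟨c, ⟨(hγc.prodMk continuous_const).continuousOn, ∅, fun t _ => (hcd t).differentiableAt⟩,
    hmem, hint, ?_, ?_, hlen⟩
  · simp [hcdef, hγdef]
  · simp [hcdef, hγdef]

lemma horiz (hglin : ∀ y ∈ Y, ∀ u, IsLinearMap ℝ (gY y u))
    (hwpos : ∀ r > (0:ℝ), 0 < w r) {δ : ℝ} (hδ : 0 < δ)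
    {σ : ℝ → F} (hσp : IsPiecewisePath σ) (hσY : ∀ t ∈ Set.Icc (0:ℝ) 1, σ t ∈ Y)
    (hσi : IntervalIntegrable (speedOf gY σ) volume 0 1) :
    ∃ c : ℝ → ℝ × F, IsPiecewisePath c ∧ (∀ t ∈ Set.Icc (0:ℝ) 1, c t ∈ RegionW Y) ∧
      IntervalIntegrable (speedOf (warpedW k w gY) c) volume 0 1 ∧
      c 0 = (δ, σ 0) ∧ c 1 = (δ, σ 1) ∧
      lengthOf (warpedW k w gY) c = Real.sqrt (w δ) * lengthOf gY σ := by
  obtain ⟨hσc, s, hσd⟩ := hσp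
  set c : ℝ → ℝ × F := fun t => (δ, σ t) with hcdef
  have hmem : ∀ t ∈ Set.Icc (0:ℝ) 1, c t ∈ RegionW Y := fun t ht => ⟨hδ, hσY t ht⟩
  have hspeed : ∀ t ∈ Set.Icc (0:ℝ) 1,
      speedOf (warpedW k w gY) c t = Real.sqrt (w δ) * speedOf gY σ t := by
    intro t ht
    by_cases hd : DifferentiableAt ℝ σ t
    · have hD : HasDerivAt c ((0:ℝ), deriv σ t) t :=
        (hasDerivAt_const t δ).prodMk hd.hasDerivAt
      simp only [speedOf, hD.deriv]
      have hval : warpedW k w gY (c t) ((0:ℝ), deriv σ t) ((0:ℝ), deriv σ t)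
          = w δ * gY (σ t) (deriv σ t) (deriv σ t) := by
        simp only [warpedW, hcdef]
        ring
      rw [hval, Real.sqrt_mul (le_of_lt (hwpos δ hδ))]
    · have hcd : ¬ DifferentiableAt ℝ c t := fun h => hd h.snd
      have hz : gY (σ t) (0:F) (0:F) = 0 := (hglin _ (hσY t ht) 0).map_zero
      simp only [speedOf, deriv_zero_of_not_differentiableAt hcd,
        deriv_zero_of_not_differentiableAt hd]
      have hval : warpedW k w gY (c t) (0 : ℝ × F) (0 : ℝ × F) = 0 := by
        simp only [warpedW, hcdef, Prod.fst_zero, Prod.snd_zero, hz]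
        ring
      rw [hval, hz]; simp
  have hint : IntervalIntegrable (speedOf (warpedW k w gY) c) volume 0 1 := by
    apply intervalIntegrable_congr_of_finite Set.finite_empty _ (hσi.const_mul (Real.sqrt (w δ)))
    intro t ht _
    rw [Set.uIoc_of_le zero_le_one] at ht
    exact (hspeed t (Set.Ioc_subset_Icc_self ht)).symm
  have hlen : lengthOf (warpedW k w gY) c = Real.sqrt (w δ) * lengthOf gY σ := by
    show (∫ t in (0:ℝ)..1, speedOf (warpedW k w gY) c t) = _
    rw [show Real.sqrt (w δ) * lengthOf gY σ
        = ∫ t in (0:ℝ)..1, Real.sqrt (w δ) * speedOf gY σ t from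
      (intervalIntegral.integral_const_mul _ _).symm]
    apply intervalIntegral.integral_congr
    intro t ht
    rw [Set.uIcc_of_le zero_le_one] at ht
    exact hspeed t ht
  refine ⟨c, ⟨continuousOn_const.prodMk hσc, s, ?_⟩, hmem, hint, rfl, rfl, hlen⟩
  intro t ht
  exact DifferentiableAt.prodMk (differentiableAt_const δ) (hσd t ht)

end Warped

end Stmt12Aux

namespace Stmt12Aux

open MeasureTheory intervalIntegral Set Real Filter

section Warped

variable {F : Type*} [NormedAddCommGroup F] [NormedSpace ℝ F]
variable {Y : Set F} {gY : F → F → F → ℝ} {k : ℝ} {w : ℝ → ℝ}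

lemma dist_bound (hgsym : ∀ y ∈ Y, ∀ u v, gY y u v = gY y v u)
    (hglin : ∀ y ∈ Y, ∀ u, IsLinearMap ℝ (gY y u))
    (hw : ContDiffOn ℝ (⊤ : ℕ∞) w (Ioi 0)) (hwpos : ∀ r > (0:ℝ), 0 < w r) (hk : 0 < k)
    {r₀ r₁ δ : ℝ} (h₀ : 0 < r₀) (h₁ : 0 < r₁) (hδ : 0 < δ)
    {y₀ y₁ : F} (hy₀ : y₀ ∈ Y) (hy₁ : y₁ ∈ Y)
    {σ : ℝ → F} (hσp : IsPiecewisePath σ) (hσY : ∀ t ∈ Set.Icc (0:ℝ) 1, σ t ∈ Y)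
    (hσi : IntervalIntegrable (speedOf gY σ) volume 0 1) (hσ0 : σ 0 = y₀) (hσ1 : σ 1 = y₁) :
    pseudoDistOf (RegionW Y) (warpedW k w gY) (r₀, y₀) (r₁, y₁) ≤
      (∫ q in (min r₀ δ)..(max r₀ δ), Real.sqrt (k * w q) / q)
        + Real.sqrt (w δ) * lengthOf gY σ
        + (∫ q in (min δ r₁)..(max δ r₁), Real.sqrt (k * w q) / q) := by
  obtain ⟨c₁, hc₁p, hc₁U, hc₁i, hc₁0, hc₁1, hc₁len⟩ :=
    radial (Y := Y) hglin hw hwpos hk h₀ hδ hy₀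
  obtain ⟨c₂, hc₂p, hc₂U, hc₂i, hc₂0, hc₂1, hc₂len⟩ :=
    horiz (k := k) hglin hwpos hδ hσp hσY hσi
  obtain ⟨c₃, hc₃p, hc₃U, hc₃i, hc₃0, hc₃1, hc₃len⟩ :=
    radial (Y := Y) hglin hw hwpos hk hδ h₁ hy₁
  obtain ⟨c₁₂, hc₁₂p, hc₁₂U, hc₁₂i, hc₁₂0, hc₁₂1, hc₁₂len⟩ :=
    concat (warped_scale hgsym hglin) hc₁p hc₁U hc₁i hc₂p hc₂U hc₂i
      (by rw [hc₁1, hc₂0, hσ0])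
  obtain ⟨cA, hcAp, hcAU, hcAi, hcA0, hcA1, hcAlen⟩ :=
    concat (warped_scale hgsym hglin) hc₁₂p hc₁₂U hc₁₂i hc₃p hc₃U hc₃i
      (by rw [hc₁₂1, hc₂1, hc₃0, hσ1])
  have hle := pseudoDistOf_le (RegionW Y) (warpedW k w gY) (r₀, y₀) (r₁, y₁) cA
    hcAp hcAU hcAi (by rw [hcA0, hc₁₂0, hc₁0]) (by rw [hcA1, hc₃1])
  rw [hcAlen, hc₁₂len, hc₁len, hc₂len, hc₃len] at hle
  linarith

end Warped

end Stmt12Aux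

open Stmt12Aux

/-- Lemma `lem:diam`.  For the Riemannian metric `g = g(w)` on
`ℝ_{>0} × Y`, with `T₀ = lim_{r→0} T(r)` and `T_∞ = lim_{r→∞} T(r)`:
(1) if `T₀ ∈ ℝ` and `lim_{r→0} w(r) = 0`, then
`d_g((r₀,y₀),(r₁,y₁)) ≤ T(r₀) + T(r₁) − 2T₀`, so for every `R > 0` the
`d_g`-diameter of `{(r,y) | r ≤ R}` is at most `2(T(R) − T₀)`;
(2) if `T_∞ ∈ ℝ` and `lim_{r→∞} w(r) = 0`, then
`d_g((r₀,y₀),(r₁,y₁)) ≤ 2T_∞ − T(r₀) − T(r₁)`, so for every `R > 0` the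
`d_g`-diameter of `{(r,y) | r ≥ R}` is at most `2(T_∞ − T(R))`. -/
theorem statement_12
    {F : Type*} [NormedAddCommGroup F] [NormedSpace ℝ F]
    (Y : Set F) (hYopen : IsOpen Y)
    (gY : F → F → F → ℝ) (hgY : IsPseudoMetricOn Y gY)
    (hgYpos : ∀ y ∈ Y, ∀ a : F, a ≠ 0 → 0 < gY y a a)
    (hgYsm : ∀ u v, ContDiffOn ℝ (⊤ : ℕ∞) (fun y => gY y u v) Y)
    (k : ℝ) (hk : 0 < k)
    (w : ℝ → ℝ) (hw : ContDiffOn ℝ (⊤ : ℕ∞) w (Ioi 0)) (hwpos : ∀ r > (0:ℝ), 0 < w r)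
    -- `Y` is connected by piecewise smooth paths
    (hconn : ∀ y ∈ Y, ∀ y' ∈ Y, ∃ c : ℝ → F,
      IsPiecewisePath c ∧ (∀ t ∈ Set.Icc (0:ℝ) 1, c t ∈ Y) ∧
      IntervalIntegrable (speedOf gY c) MeasureTheory.volume 0 1 ∧
      c 0 = y ∧ c 1 = y')
    (R₀ : ℝ) (hR₀ : 0 < R₀) :
    -- (1)
    (∀ T0 : ℝ,
      Filter.Tendsto (TW k w R₀) (nhdsWithin 0 (Ioi 0)) (nhds T0) →
      Filter.Tendsto w (nhdsWithin 0 (Ioi 0)) (nhds 0) →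
      (∀ r₀ > (0:ℝ), ∀ y₀ ∈ Y, ∀ r₁ > (0:ℝ), ∀ y₁ ∈ Y,
        pseudoDistOf (RegionW Y) (warpedW k w gY) (r₀, y₀) (r₁, y₁) ≤
          TW k w R₀ r₀ + TW k w R₀ r₁ - 2 * T0) ∧
      (∀ R > (0:ℝ), ∀ r₀ > (0:ℝ), ∀ y₀ ∈ Y, ∀ r₁ > (0:ℝ), ∀ y₁ ∈ Y,
        r₀ ≤ R → r₁ ≤ R →
        pseudoDistOf (RegionW Y) (warpedW k w gY) (r₀, y₀) (r₁, y₁) ≤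
          2 * (TW k w R₀ R - T0))) ∧
    -- (2)
    (∀ Tinf : ℝ,
      Filter.Tendsto (TW k w R₀) Filter.atTop (nhds Tinf) →
      Filter.Tendsto w Filter.atTop (nhds 0) →
      (∀ r₀ > (0:ℝ), ∀ y₀ ∈ Y, ∀ r₁ > (0:ℝ), ∀ y₁ ∈ Y,
        pseudoDistOf (RegionW Y) (warpedW k w gY) (r₀, y₀) (r₁, y₁) ≤
          2 * Tinf - TW k w R₀ r₀ - TW k w R₀ r₁) ∧
      (∀ R > (0:ℝ), ∀ r₀ > (0:ℝ), ∀ y₀ ∈ Y, ∀ r₁ > (0:ℝ), ∀ y₁ ∈ Y,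
        R ≤ r₀ → R ≤ r₁ →
        pseudoDistOf (RegionW Y) (warpedW k w gY) (r₀, y₀) (r₁, y₁) ≤
          2 * (Tinf - TW k w R₀ R))) := by
  obtain ⟨hgsym, hglin, -⟩ := hgY
  constructor
  · -- part (1)
    intro T0 hT0 hw0
    have main : ∀ r₀ > (0:ℝ), ∀ y₀ ∈ Y, ∀ r₁ > (0:ℝ), ∀ y₁ ∈ Y,
        pseudoDistOf (RegionW Y) (warpedW k w gY) (r₀, y₀) (r₁, y₁) ≤
          TW k w R₀ r₀ + TW k w R₀ r₁ - 2 * T0 := by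
      intro r₀ h₀ y₀ hy₀ r₁ h₁ y₁ hy₁
      obtain ⟨σ, hσp, hσY, hσi, hσ0, hσ1⟩ := hconn y₀ hy₀ y₁ hy₁
      have hlim : Filter.Tendsto (fun δ => (TW k w R₀ r₀ - TW k w R₀ δ)
            + Real.sqrt (w δ) * lengthOf gY σ + (TW k w R₀ r₁ - TW k w R₀ δ))
          (nhdsWithin 0 (Ioi 0))
          (nhds ((TW k w R₀ r₀ - T0) + Real.sqrt 0 * lengthOf gY σ + (TW k w R₀ r₁ - T0))) := by
        have h1 : Filter.Tendsto (fun δ => TW k w R₀ r₀ - TW k w R₀ δ) (nhdsWithin 0 (Ioi 0))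
            (nhds (TW k w R₀ r₀ - T0)) := tendsto_const_nhds.sub hT0
        have h2 : Filter.Tendsto (fun δ => Real.sqrt (w δ) * lengthOf gY σ)
            (nhdsWithin 0 (Ioi 0)) (nhds (Real.sqrt 0 * lengthOf gY σ)) :=
          (((Real.continuous_sqrt.tendsto 0).comp hw0)).mul_const _
        have h3 : Filter.Tendsto (fun δ => TW k w R₀ r₁ - TW k w R₀ δ) (nhdsWithin 0 (Ioi 0))
            (nhds (TW k w R₀ r₁ - T0)) := tendsto_const_nhds.sub hT0
        exact (h1.add h2).add h3
      have heq : (TW k w R₀ r₀ - T0) + Real.sqrt 0 * lengthOf gY σ + (TW k w R₀ r₁ - T0)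
          = TW k w R₀ r₀ + TW k w R₀ r₁ - 2 * T0 := by
        rw [Real.sqrt_zero]; ring
      rw [heq] at hlim
      apply ge_of_tendsto hlim
      filter_upwards [Ioo_mem_nhdsGT (lt_min h₀ h₁)] with δ hδ
      obtain ⟨hδ0, hδm⟩ := hδ
      have hδr₀ : δ ≤ r₀ := le_of_lt (lt_of_lt_of_le hδm (min_le_left _ _))
      have hδr₁ : δ ≤ r₁ := le_of_lt (lt_of_lt_of_le hδm (min_le_right _ _))
      have hb := dist_bound hgsym hglin hw hwpos hk h₀ h₁ hδ0 hy₀ hy₁ hσp hσY hσi hσ0 hσ1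
      rw [min_eq_right hδr₀, max_eq_left hδr₀, min_eq_left hδr₁, max_eq_right hδr₁,
        ← TW_diff hw hR₀ hδ0 h₀, ← TW_diff hw hR₀ hδ0 h₁] at hb
      exact hb
    refine ⟨main, ?_⟩
    intro R hR r₀ h₀ y₀ hy₀ r₁ h₁ y₁ hy₁ hr₀ hr₁
    have hm := main r₀ h₀ y₀ hy₀ r₁ h₁ y₁ hy₁
    have m0 := TW_mono (k := k) hw hR₀ h₀ hr₀
    have m1 := TW_mono (k := k) hw hR₀ h₁ hr₁
    linarith
  · -- part (2)
    intro Tinf hTinf hwinf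
    have main : ∀ r₀ > (0:ℝ), ∀ y₀ ∈ Y, ∀ r₁ > (0:ℝ), ∀ y₁ ∈ Y,
        pseudoDistOf (RegionW Y) (warpedW k w gY) (r₀, y₀) (r₁, y₁) ≤
          2 * Tinf - TW k w R₀ r₀ - TW k w R₀ r₁ := by
      intro r₀ h₀ y₀ hy₀ r₁ h₁ y₁ hy₁
      obtain ⟨σ, hσp, hσY, hσi, hσ0, hσ1⟩ := hconn y₀ hy₀ y₁ hy₁
      have hlim : Filter.Tendsto (fun δ => (TW k w R₀ δ - TW k w R₀ r₀)
            + Real.sqrt (w δ) * lengthOf gY σ + (TW k w R₀ δ - TW k w R₀ r₁))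
          Filter.atTop
          (nhds ((Tinf - TW k w R₀ r₀) + Real.sqrt 0 * lengthOf gY σ
            + (Tinf - TW k w R₀ r₁))) := by
        have h1 : Filter.Tendsto (fun δ => TW k w R₀ δ - TW k w R₀ r₀) Filter.atTop
            (nhds (Tinf - TW k w R₀ r₀)) := hTinf.sub tendsto_const_nhds
        have h2 : Filter.Tendsto (fun δ => Real.sqrt (w δ) * lengthOf gY σ)
            Filter.atTop (nhds (Real.sqrt 0 * lengthOf gY σ)) :=
          (((Real.continuous_sqrt.tendsto 0).comp hwinf)).mul_const _
        have h3 : Filter.Tendsto (fun δ => TW k w R₀ δ - TW k w R₀ r₁) Filter.atTop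
            (nhds (Tinf - TW k w R₀ r₁)) := hTinf.sub tendsto_const_nhds
        exact (h1.add h2).add h3
      have heq : (Tinf - TW k w R₀ r₀) + Real.sqrt 0 * lengthOf gY σ + (Tinf - TW k w R₀ r₁)
          = 2 * Tinf - TW k w R₀ r₀ - TW k w R₀ r₁ := by
        rw [Real.sqrt_zero]; ring
      rw [heq] at hlim
      apply ge_of_tendsto hlim
      filter_upwards [Filter.eventually_gt_atTop (max r₀ r₁),
        Filter.eventually_gt_atTop 0] with δ hδm hδ0
      have hr₀δ : r₀ ≤ δ := le_of_lt (lt_of_le_of_lt (le_max_left _ _) hδm)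
      have hr₁δ : r₁ ≤ δ := le_of_lt (lt_of_le_of_lt (le_max_right _ _) hδm)
      have hb := dist_bound hgsym hglin hw hwpos hk h₀ h₁ hδ0 hy₀ hy₁ hσp hσY hσi hσ0 hσ1
      rw [min_eq_left hr₀δ, max_eq_right hr₀δ, min_eq_right hr₁δ, max_eq_left hr₁δ,
        ← TW_diff hw hR₀ h₀ hδ0, ← TW_diff hw hR₀ h₁ hδ0] at hb
      exact hb
    refine ⟨main, ?_⟩
    intro R hR r₀ h₀ y₀ hy₀ r₁ h₁ y₁ hy₁ hr₀ hr₁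
    have hm := main r₀ h₀ y₀ hy₀ r₁ h₁ y₁ hy₁
    have m0 := TW_mono (k := k) hw hR₀ hR hr₀
    have m1 := TW_mono (k := k) hw hR₀ hR hr₁
    linarith
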